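/- Let H be a Hopf algebra and γ: H ⊗ H → k a convolution-invertible 2-cocycle. If P is a left H-comodule algebra, then P equipped with the deformed product p ·_γ q := γ(p₍₋₁₎, q₍₋₁₎) p₍₀₎ q₍₀₎ is an associative unital algebra (denoted _γP), and the original left coaction makes _γP a left comodule algebra over the cotwisted Hopf algebra H^γ. -/

import Mathlib

/-!
STATEMENT 9: Let `H` be a Hopf algebra and `γ : H ⊗ H → k` a
convolution-invertible 2-cocycle.  If `P` is a left `H`-comodule algebra, then
`P` with the deformed product `p ·_γ q := γ(p₍₋₁₎, q₍₋₁₎) p₍₀₎ q₍₀₎` is an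
associative unital algebra `_γP`, and the original coaction makes `_γP` a left
comodule algebra over the cotwisted Hopf algebra `H^γ` (whose product is
`x ·_γ y = γ(x₁, y₁) x₂ y₂ γ⁻¹(x₃, y₃)`).
-/

open TensorProduct LinearMap
set_option maxHeartbeats 1000000
set_option synthInstance.maxHeartbeats 200000

noncomputable section

variable (k H P : Type) [Field k] [Ring H] [HopfAlgebra k H] [Ring P] [Algebra k P]

/-- `δ` is a (coassociative, counital) left `H`-comodule structure on `P`. -/
def IsLeftComodule (δ : P →ₗ[k] H ⊗[k] P) : Prop :=
  (∀ p, (TensorProduct.lid k P) ((rTensor P Coalgebra.counit) (δ p)) = p) ∧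
  (∀ p, (rTensor P Coalgebra.comul) (δ p)
      = (TensorProduct.assoc k H H P).symm ((lTensor H δ) (δ p)))

/-- `δ` makes `P` a left `H`-comodule algebra. -/
def IsLeftComodAlg (δ : P →ₗ[k] H ⊗[k] P) : Prop :=
  IsLeftComodule k H P δ ∧ (∀ p q : P, δ (p * q) = δ p * δ q) ∧ δ 1 = 1

/-- Comultiplication iterated once: `x ↦ x₁ ⊗ (x₂ ⊗ x₃)`. -/
def comul₂ : H →ₗ[k] H ⊗[k] (H ⊗[k] H) :=
  (lTensor H Coalgebra.comul) ∘ₗ Coalgebra.comul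

/-- Convolution product of two functionals on the coalgebra `H ⊗ H`. -/
def convHH (γ γ' : H ⊗[k] H →ₗ[k] k) : H ⊗[k] H →ₗ[k] k :=
  (TensorProduct.lid k k).toLinearMap ∘ₗ (TensorProduct.map γ γ') ∘ₗ
    (Coalgebra.comul (R := k) (A := H ⊗[k] H))

/-- Left-hand side `x ⊗ y ⊗ z ↦ γ(x₁, y₁) γ(x₂ y₂, z)` of the 2-cocycle
condition, as a map `(H ⊗ H) ⊗ H → k`. -/
def cocycleLHS (γ : H ⊗[k] H →ₗ[k] k) : (H ⊗[k] H) ⊗[k] H →ₗ[k] k :=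
  (TensorProduct.lid k k).toLinearMap ∘ₗ
    (TensorProduct.map γ (γ ∘ₗ rTensor H (mul' k H))) ∘ₗ
    (TensorProduct.assoc k (H ⊗[k] H) (H ⊗[k] H) H).toLinearMap ∘ₗ
    (rTensor H (Coalgebra.comul (R := k) (A := H ⊗[k] H)))

/-- Right-hand side `x ⊗ y ⊗ z ↦ γ(y₁, z₁) γ(x, y₂ z₂)` of the 2-cocycle
condition, as a map `H ⊗ (H ⊗ H) → k`. -/
def cocycleRHS (γ : H ⊗[k] H →ₗ[k] k) : H ⊗[k] (H ⊗[k] H) →ₗ[k] k :=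
  (TensorProduct.lid k k).toLinearMap ∘ₗ
    (TensorProduct.map γ (γ ∘ₗ lTensor H (mul' k H))) ∘ₗ
    (TensorProduct.leftComm k H (H ⊗[k] H) (H ⊗[k] H)).toLinearMap ∘ₗ
    (lTensor H (Coalgebra.comul (R := k) (A := H ⊗[k] H)))

/-- `γ` is a convolution-invertible 2-cocycle on `H`, with convolution
inverse `γinv`. -/
def IsTwoCocycle (γ γinv : H ⊗[k] H →ₗ[k] k) : Prop :=
  convHH k H γ γinv = Coalgebra.counit ∧
  convHH k H γinv γ = Coalgebra.counit ∧
  cocycleLHS k H γ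
      = cocycleRHS k H γ ∘ₗ (TensorProduct.assoc k H H H).toLinearMap ∧
  (∀ x : H, γ ((1 : H) ⊗ₜ[k] x) = Coalgebra.counit x) ∧
  (∀ x : H, γ (x ⊗ₜ[k] (1 : H)) = Coalgebra.counit x)

/-- The cotwisted product on `H`: `x ⊗ y ↦ γ(x₁, y₁) x₂ y₂ γ⁻¹(x₃, y₃)`. -/
def twistedMulH (γ γinv : H ⊗[k] H →ₗ[k] k) : H ⊗[k] H →ₗ[k] H :=
  (TensorProduct.lid k H).toLinearMap ∘ₗ
    (TensorProduct.map γ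
      ((TensorProduct.rid k H).toLinearMap ∘ₗ
        (TensorProduct.map (mul' k H) γinv) ∘ₗ
        (TensorProduct.tensorTensorTensorComm k H H H H).toLinearMap)) ∘ₗ
    (TensorProduct.tensorTensorTensorComm k H (H ⊗[k] H) H (H ⊗[k] H)).toLinearMap ∘ₗ
    (TensorProduct.map (comul₂ k H) (comul₂ k H))

/-- The twisted product on `P`: `p ⊗ q ↦ γ(p₍₋₁₎, q₍₋₁₎) p₍₀₎ q₍₀₎`. -/
def twistedMulP (δ : P →ₗ[k] H ⊗[k] P) (γ : H ⊗[k] H →ₗ[k] k) :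
    P ⊗[k] P →ₗ[k] P :=
  (TensorProduct.lid k P).toLinearMap ∘ₗ
    (TensorProduct.map γ (mul' k P)) ∘ₗ
    (TensorProduct.tensorTensorTensorComm k H P H P).toLinearMap ∘ₗ
    (TensorProduct.map δ δ)

/-- The twisted product on `H ⊗ P` (product of `H^γ` on the first leg and of
`_γP` on the second). -/
def twistedMulHP (δ : P →ₗ[k] H ⊗[k] P) (γ γinv : H ⊗[k] H →ₗ[k] k) :
    (H ⊗[k] P) ⊗[k] (H ⊗[k] P) →ₗ[k] H ⊗[k] P :=
  (TensorProduct.map (twistedMulH k H γ γinv) (twistedMulP k H P δ γ)) ∘ₗ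
    (TensorProduct.tensorTensorTensorComm k H P H P).toLinearMap


/-! ### Auxiliary definitions -/

section Aux

/-- `Lam γ ((x ⊗ u) ⊗ (y ⊗ v)) = γ(x ⊗ y) • (u * v)`. -/
def Lam (γ : H ⊗[k] H →ₗ[k] k) : (H ⊗[k] P) ⊗[k] (H ⊗[k] P) →ₗ[k] P :=
  (TensorProduct.lid k P).toLinearMap ∘ₗ (TensorProduct.map γ (mul' k P)) ∘ₗ
    (TensorProduct.tensorTensorTensorComm k H P H P).toLinearMap

lemma twistedMulP_eq (δ : P →ₗ[k] H ⊗[k] P) (γ : H ⊗[k] H →ₗ[k] k) :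
    twistedMulP k H P δ γ = Lam k H P γ ∘ₗ TensorProduct.map δ δ := rfl

lemma twistedMulP_apply (δ : P →ₗ[k] H ⊗[k] P) (γ : H ⊗[k] H →ₗ[k] k) (p q : P) :
    twistedMulP k H P δ γ (p ⊗ₜ[k] q) = Lam k H P γ (δ p ⊗ₜ[k] δ q) := rfl

lemma Lam_tmul (γ : H ⊗[k] H →ₗ[k] k) (x y : H) (u v : P) :
    Lam k H P γ ((x ⊗ₜ[k] u) ⊗ₜ[k] (y ⊗ₜ[k] v)) = γ (x ⊗ₜ[k] y) • (u * v) := by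
  simp [Lam]

/-- `Psi γ (((x ⊗ x') ⊗ u) ⊗ ((y ⊗ y') ⊗ v)) = γ(x ⊗ y) • ((x' * y') ⊗ (u * v))`. -/
def Psi (γ : H ⊗[k] H →ₗ[k] k) :
    ((H ⊗[k] H) ⊗[k] P) ⊗[k] ((H ⊗[k] H) ⊗[k] P) →ₗ[k] H ⊗[k] P :=
  (TensorProduct.map
    ((TensorProduct.lid k H).toLinearMap ∘ₗ (TensorProduct.map γ (mul' k H)) ∘ₗ
      (TensorProduct.tensorTensorTensorComm k H H H H).toLinearMap)
    (mul' k P)) ∘ₗ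
    (TensorProduct.tensorTensorTensorComm k (H ⊗[k] H) P (H ⊗[k] H) P).toLinearMap

lemma Psi_tmul (γ : H ⊗[k] H →ₗ[k] k) (x x' y y' : H) (u v : P) :
    Psi k H P γ (((x ⊗ₜ[k] x') ⊗ₜ[k] u) ⊗ₜ[k] ((y ⊗ₜ[k] y') ⊗ₜ[k] v))
      = γ (x ⊗ₜ[k] y) • ((x' * y') ⊗ₜ[k] (u * v)) := by
  simp [Psi, TensorProduct.smul_tmul']

lemma comulHH_tmul (x y : H) :
    Coalgebra.comul (R := k) (A := H ⊗[k] H) (x ⊗ₜ[k] y)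
      = TensorProduct.tensorTensorTensorComm k H H H H
          (Coalgebra.comul (R := k) x ⊗ₜ[k] Coalgebra.comul (R := k) y) := rfl

lemma counitHH_tmul (x y : H) :
    Coalgebra.counit (R := k) (A := H ⊗[k] H) (x ⊗ₜ[k] y)
      = Coalgebra.counit (R := k) x * Coalgebra.counit (R := k) y := by
  simp [mul_comm]

end Aux


section Aux2

lemma Lam_one_left (γ : H ⊗[k] H →ₗ[k] k)
    (h1 : ∀ x : H, γ ((1 : H) ⊗ₜ[k] x) = Coalgebra.counit x) (t : H ⊗[k] P) :
    Lam k H P γ (((1 : H) ⊗ₜ[k] (1 : P)) ⊗ₜ[k] t)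
      = (TensorProduct.lid k P) ((rTensor P Coalgebra.counit) t) := by
  induction t using TensorProduct.induction_on with
  | zero => simp
  | tmul x u => simp [Lam_tmul, h1]
  | add a b ha hb => simp only [TensorProduct.tmul_add, map_add, ha, hb]

lemma Lam_one_right (γ : H ⊗[k] H →ₗ[k] k)
    (h1 : ∀ x : H, γ (x ⊗ₜ[k] (1 : H)) = Coalgebra.counit x) (t : H ⊗[k] P) :
    Lam k H P γ (t ⊗ₜ[k] ((1 : H) ⊗ₜ[k] (1 : P)))
      = (TensorProduct.lid k P) ((rTensor P Coalgebra.counit) t) := by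
  induction t using TensorProduct.induction_on with
  | zero => simp
  | tmul x u => simp [Lam_tmul, h1]
  | add a b ha hb => simp only [TensorProduct.add_tmul, map_add, ha, hb]

lemma Psi_assoc_symm (γ : H ⊗[k] H →ₗ[k] k) (x y : H) (w z : H ⊗[k] P) :
    Psi k H P γ ((TensorProduct.assoc k H H P).symm (x ⊗ₜ[k] w)
        ⊗ₜ[k] (TensorProduct.assoc k H H P).symm (y ⊗ₜ[k] z))
      = γ (x ⊗ₜ[k] y) • (w * z) := by
  induction w using TensorProduct.induction_on with
  | zero => simp
  | tmul w1 w2 =>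
    induction z using TensorProduct.induction_on with
    | zero => simp
    | tmul z1 z2 =>
      simp [TensorProduct.assoc_symm_tmul, Psi_tmul, Algebra.TensorProduct.tmul_mul_tmul]
    | add a b ha hb =>
      simp only [TensorProduct.tmul_add, map_add, mul_add, smul_add, ha, hb]
  | add a b ha hb =>
    simp only [TensorProduct.tmul_add, map_add, add_mul, smul_add, ha, hb,
      TensorProduct.add_tmul]

lemma deltaLam (δ : P →ₗ[k] H ⊗[k] P) (γ : H ⊗[k] H →ₗ[k] k)
    (hm : ∀ p q : P, δ (p * q) = δ p * δ q)
    (hco : ∀ p, (rTensor P Coalgebra.comul) (δ p)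
      = (TensorProduct.assoc k H H P).symm ((lTensor H δ) (δ p))) (p q : P) :
    δ (twistedMulP k H P δ γ (p ⊗ₜ[k] q))
      = Psi k H P γ ((rTensor P Coalgebra.comul (δ p)) ⊗ₜ[k]
          (rTensor P Coalgebra.comul (δ q))) := by
  rw [twistedMulP_apply, hco p, hco q]
  have key : ∀ s t : H ⊗[k] P, δ (Lam k H P γ (s ⊗ₜ[k] t))
      = Psi k H P γ ((TensorProduct.assoc k H H P).symm ((lTensor H δ) s)
          ⊗ₜ[k] (TensorProduct.assoc k H H P).symm ((lTensor H δ) t)) := by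
    intro s t
    induction s using TensorProduct.induction_on with
    | zero => simp
    | tmul x u =>
      induction t using TensorProduct.induction_on with
      | zero => simp
      | tmul y v => simp [Lam_tmul, hm, Psi_assoc_symm]
      | add a b ha hb => simp only [TensorProduct.tmul_add, map_add, ha, hb]
    | add a b ha hb => simp only [TensorProduct.add_tmul, map_add, ha, hb]
  exact key _ _

end Aux2


section Aux3

/-- Triple multiplication `a ⊗ (b ⊗ c) ↦ a * (b * c)`. -/
def M3 : P ⊗[k] (P ⊗[k] P) →ₗ[k] P := mul' k P ∘ₗ lTensor P (mul' k P)

lemma M3_tmul (a b c : P) : M3 k P (a ⊗ₜ[k] (b ⊗ₜ[k] c)) = a * (b * c) := by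
  simp [M3]

/-- Rearrangement `(x⊗a)⊗((y⊗b)⊗(z⊗c)) ↦ ((x⊗y)⊗z)⊗(a⊗(b⊗c))`. -/
def rearr : (H ⊗[k] P) ⊗[k] ((H ⊗[k] P) ⊗[k] (H ⊗[k] P)) →ₗ[k]
    ((H ⊗[k] H) ⊗[k] H) ⊗[k] (P ⊗[k] (P ⊗[k] P)) :=
  (rTensor (P ⊗[k] (P ⊗[k] P)) (TensorProduct.assoc k H H H).symm.toLinearMap) ∘ₗ
    (TensorProduct.tensorTensorTensorComm k H P (H ⊗[k] H) (P ⊗[k] P)).toLinearMap ∘ₗ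
    lTensor (H ⊗[k] P) (TensorProduct.tensorTensorTensorComm k H P H P).toLinearMap

lemma rearr_tmul (x y z : H) (a b c : P) :
    rearr k H P ((x ⊗ₜ[k] a) ⊗ₜ[k] ((y ⊗ₜ[k] b) ⊗ₜ[k] (z ⊗ₜ[k] c)))
      = ((x ⊗ₜ[k] y) ⊗ₜ[k] z) ⊗ₜ[k] (a ⊗ₜ[k] (b ⊗ₜ[k] c)) := by
  simp [rearr, TensorProduct.assoc_symm_tmul]

lemma L0 (γ : H ⊗[k] H →ₗ[k] k) (X Y : H ⊗[k] H) (z : H) (a b c : P) :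
    Lam k H P γ ((Psi k H P γ ((X ⊗ₜ[k] a) ⊗ₜ[k] (Y ⊗ₜ[k] b))) ⊗ₜ[k] (z ⊗ₜ[k] c))
      = ((TensorProduct.lid k k) ((TensorProduct.map γ (γ ∘ₗ rTensor H (mul' k H)))
          ((TensorProduct.assoc k (H ⊗[k] H) (H ⊗[k] H) H)
            ((TensorProduct.tensorTensorTensorComm k H H H H (X ⊗ₜ[k] Y)) ⊗ₜ[k] z))))
        • (a * (b * c)) := by
  induction X using TensorProduct.induction_on with
  | zero => simp
  | tmul x1 x2 =>
    induction Y using TensorProduct.induction_on with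
    | zero => simp
    | tmul y1 y2 =>
      simp [Psi_tmul, TensorProduct.assoc_tmul, ← TensorProduct.smul_tmul',
        TensorProduct.tmul_smul, map_smul, Lam_tmul, smul_smul, smul_eq_mul,
        mul_assoc, mul_comm]
    | add s t hs ht =>
      simp only [TensorProduct.tmul_add, TensorProduct.add_tmul, map_add, hs, ht,
        LinearMap.add_apply, add_smul, smul_add]
  | add s t hs ht =>
    simp only [TensorProduct.tmul_add, TensorProduct.add_tmul, map_add, hs, ht,
      LinearMap.add_apply, add_smul, smul_add]

lemma L0' (γ : H ⊗[k] H →ₗ[k] k) (Y Z : H ⊗[k] H) (x : H) (a b c : P) :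
    Lam k H P γ ((x ⊗ₜ[k] a) ⊗ₜ[k] (Psi k H P γ ((Y ⊗ₜ[k] b) ⊗ₜ[k] (Z ⊗ₜ[k] c))))
      = ((TensorProduct.lid k k) ((TensorProduct.map γ (γ ∘ₗ lTensor H (mul' k H)))
          ((TensorProduct.leftComm k H (H ⊗[k] H) (H ⊗[k] H))
            (x ⊗ₜ[k] (TensorProduct.tensorTensorTensorComm k H H H H (Y ⊗ₜ[k] Z))))))
        • (a * (b * c)) := by
  induction Y using TensorProduct.induction_on with
  | zero => simp
  | tmul y1 y2 =>
    induction Z using TensorProduct.induction_on with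
    | zero => simp
    | tmul z1 z2 =>
      simp [Psi_tmul, TensorProduct.leftComm_tmul, ← TensorProduct.smul_tmul',
        TensorProduct.tmul_smul, map_smul, Lam_tmul, smul_smul, smul_eq_mul,
        mul_assoc, mul_comm]
    | add s t hs ht =>
      simp only [TensorProduct.tmul_add, TensorProduct.add_tmul, map_add, hs, ht,
        LinearMap.add_apply, add_smul, smul_add]
  | add s t hs ht =>
    simp only [TensorProduct.tmul_add, TensorProduct.add_tmul, map_add, hs, ht,
      LinearMap.add_apply, add_smul, smul_add]

lemma lemL (γ : H ⊗[k] H →ₗ[k] k) (s t u : H ⊗[k] P) :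
    Lam k H P γ ((Psi k H P γ ((rTensor P Coalgebra.comul s) ⊗ₜ[k]
        (rTensor P Coalgebra.comul t))) ⊗ₜ[k] u)
      = (TensorProduct.lid k P) ((TensorProduct.map (cocycleLHS k H γ) (M3 k P))
          (rearr k H P (s ⊗ₜ[k] (t ⊗ₜ[k] u)))) := by
  induction s using TensorProduct.induction_on with
  | zero => simp
  | tmul x a =>
    induction t using TensorProduct.induction_on with
    | zero => simp
    | tmul y b =>
      induction u using TensorProduct.induction_on with
      | zero => simp
      | tmul z c =>
        rw [rearr_tmul]
        simp only [rTensor_tmul, TensorProduct.map_tmul, L0]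
        simp [cocycleLHS, M3, comulHH_tmul, TensorProduct.lid_tmul,
          AlgebraTensorModule.tensorTensorTensorComm_eq]
      | add s' t' hs ht =>
        simp only [TensorProduct.tmul_add, map_add, hs, ht]
    | add s' t' hs ht =>
      simp only [TensorProduct.tmul_add, TensorProduct.add_tmul, map_add, hs, ht]
  | add s' t' hs ht =>
    simp only [TensorProduct.tmul_add, TensorProduct.add_tmul, map_add, hs, ht]

lemma lemL' (γ : H ⊗[k] H →ₗ[k] k) (s t u : H ⊗[k] P) :
    Lam k H P γ (s ⊗ₜ[k] (Psi k H P γ ((rTensor P Coalgebra.comul t) ⊗ₜ[k]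
        (rTensor P Coalgebra.comul u))))
      = (TensorProduct.lid k P) ((TensorProduct.map
          (cocycleRHS k H γ ∘ₗ (TensorProduct.assoc k H H H).toLinearMap) (M3 k P))
          (rearr k H P (s ⊗ₜ[k] (t ⊗ₜ[k] u)))) := by
  induction s using TensorProduct.induction_on with
  | zero => simp
  | tmul x a =>
    induction t using TensorProduct.induction_on with
    | zero => simp
    | tmul y b =>
      induction u using TensorProduct.induction_on with
      | zero => simp
      | tmul z c =>
        rw [rearr_tmul]
        simp only [rTensor_tmul, TensorProduct.map_tmul, L0']
        simp [cocycleRHS, M3, comulHH_tmul, TensorProduct.assoc_tmul, TensorProduct.lid_tmul,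
          AlgebraTensorModule.tensorTensorTensorComm_eq]
      | add s' t' hs ht =>
        simp only [TensorProduct.tmul_add, map_add, hs, ht]
    | add s' t' hs ht =>
      simp only [TensorProduct.tmul_add, TensorProduct.add_tmul, map_add, hs, ht]
  | add s' t' hs ht =>
    simp only [TensorProduct.tmul_add, TensorProduct.add_tmul, map_add, hs, ht]

end Aux3


section Aux4

/-- `σ ((c ⊗ h) ⊗ w) = c ⊗ σ'(h,w)` reassociation used in `rhoMap`. -/
def sigmaMap : (H ⊗[k] H) ⊗[k] (H ⊗[k] P) →ₗ[k] H ⊗[k] ((H ⊗[k] H) ⊗[k] P) :=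
  lTensor H (TensorProduct.assoc k H H P).symm.toLinearMap ∘ₗ
    (TensorProduct.assoc k H H (H ⊗[k] P)).toLinearMap

def rhoMap : (H ⊗[k] (H ⊗[k] H)) ⊗[k] (H ⊗[k] P) →ₗ[k]
    H ⊗[k] (H ⊗[k] ((H ⊗[k] H) ⊗[k] P)) :=
  lTensor H (sigmaMap k H P) ∘ₗ (TensorProduct.assoc k H (H ⊗[k] H) (H ⊗[k] P)).toLinearMap

def Wmap : H ⊗[k] (H ⊗[k] P) →ₗ[k] H ⊗[k] (H ⊗[k] ((H ⊗[k] H) ⊗[k] P)) :=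
  rhoMap k H P ∘ₗ rTensor (H ⊗[k] P) (comul₂ k H)

/-- `(g⊗h)⊗(g'⊗h') ↦ γinv(g⊗g') * γ(h⊗h')`. -/
def conv2 (γinv γ : H ⊗[k] H →ₗ[k] k) : (H ⊗[k] H) ⊗[k] (H ⊗[k] H) →ₗ[k] k :=
  mul' k k ∘ₗ TensorProduct.map γinv γ ∘ₗ
    (TensorProduct.tensorTensorTensorComm k H H H H).toLinearMap

def G4 (γinv γ : H ⊗[k] H →ₗ[k] k) :
    ((H ⊗[k] H) ⊗[k] P) ⊗[k] ((H ⊗[k] H) ⊗[k] P) →ₗ[k] P :=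
  (TensorProduct.lid k P).toLinearMap ∘ₗ
    TensorProduct.map (conv2 k H γinv γ) (mul' k P) ∘ₗ
    (TensorProduct.tensorTensorTensorComm k (H ⊗[k] H) P (H ⊗[k] H) P).toLinearMap

def G3 (γinv γ : H ⊗[k] H →ₗ[k] k) :
    (H ⊗[k] ((H ⊗[k] H) ⊗[k] P)) ⊗[k] (H ⊗[k] ((H ⊗[k] H) ⊗[k] P)) →ₗ[k] H ⊗[k] P :=
  TensorProduct.map (mul' k H) (G4 k H P γinv γ) ∘ₗ
    (TensorProduct.tensorTensorTensorComm k H ((H ⊗[k] H) ⊗[k] P) H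
      ((H ⊗[k] H) ⊗[k] P)).toLinearMap

def Ftw (γ γinv : H ⊗[k] H →ₗ[k] k) :
    (H ⊗[k] (H ⊗[k] ((H ⊗[k] H) ⊗[k] P))) ⊗[k]
      (H ⊗[k] (H ⊗[k] ((H ⊗[k] H) ⊗[k] P))) →ₗ[k] H ⊗[k] P :=
  (TensorProduct.lid k (H ⊗[k] P)).toLinearMap ∘ₗ
    TensorProduct.map γ (G3 k H P γinv γ) ∘ₗ
    (TensorProduct.tensorTensorTensorComm k H (H ⊗[k] ((H ⊗[k] H) ⊗[k] P)) H
      (H ⊗[k] ((H ⊗[k] H) ⊗[k] P))).toLinearMap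

def eps2 : H ⊗[k] H →ₗ[k] k :=
  mul' k k ∘ₗ TensorProduct.map (Coalgebra.counit) (Coalgebra.counit)

def G4e : (H ⊗[k] P) ⊗[k] (H ⊗[k] P) →ₗ[k] P :=
  (TensorProduct.lid k P).toLinearMap ∘ₗ
    TensorProduct.map (eps2 k H) (mul' k P) ∘ₗ
    (TensorProduct.tensorTensorTensorComm k H P H P).toLinearMap

def G3e : (H ⊗[k] (H ⊗[k] P)) ⊗[k] (H ⊗[k] (H ⊗[k] P)) →ₗ[k] H ⊗[k] P :=
  TensorProduct.map (mul' k H) (G4e k H P) ∘ₗ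
    (TensorProduct.tensorTensorTensorComm k H (H ⊗[k] P) H (H ⊗[k] P)).toLinearMap

def Fcu (γ : H ⊗[k] H →ₗ[k] k) :
    (H ⊗[k] (H ⊗[k] (H ⊗[k] P))) ⊗[k] (H ⊗[k] (H ⊗[k] (H ⊗[k] P))) →ₗ[k] H ⊗[k] P :=
  (TensorProduct.lid k (H ⊗[k] P)).toLinearMap ∘ₗ
    TensorProduct.map γ (G3e k H P) ∘ₗ
    (TensorProduct.tensorTensorTensorComm k H (H ⊗[k] (H ⊗[k] P)) H
      (H ⊗[k] (H ⊗[k] P))).toLinearMap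

end Aux4


section Aux5

lemma tmHP_apply (δ : P →ₗ[k] H ⊗[k] P) (γ γinv : H ⊗[k] H →ₗ[k] k) (s t : H ⊗[k] P) :
    twistedMulHP k H P δ γ γinv (s ⊗ₜ[k] t)
      = TensorProduct.map (twistedMulH k H γ γinv) (Lam k H P γ)
          ((TensorProduct.tensorTensorTensorComm k H (H ⊗[k] P) H (H ⊗[k] P))
            ((lTensor H δ s) ⊗ₜ[k] (lTensor H δ t))) := by
  induction s using TensorProduct.induction_on with
  | zero => simp [twistedMulHP]
  | tmul x u =>
    induction t using TensorProduct.induction_on with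
    | zero => simp [twistedMulHP]
    | tmul y v =>
      simp [twistedMulHP, twistedMulP_apply]
    | add a b ha hb => simp only [TensorProduct.tmul_add, map_add, ha, hb]
  | add a b ha hb => simp only [TensorProduct.add_tmul, map_add, ha, hb]

lemma Gident0 (γ γinv : H ⊗[k] H →ₗ[k] k) (U V : H ⊗[k] (H ⊗[k] H)) (s t : H ⊗[k] P) :
    ((TensorProduct.lid k H) ((TensorProduct.map γ
        ((TensorProduct.rid k H).toLinearMap ∘ₗ
          (TensorProduct.map (mul' k H) γinv) ∘ₗ
          (TensorProduct.tensorTensorTensorComm k H H H H).toLinearMap))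
        ((TensorProduct.tensorTensorTensorComm k H (H ⊗[k] H) H (H ⊗[k] H))
          (U ⊗ₜ[k] V))))
      ⊗ₜ[k] (Lam k H P γ (s ⊗ₜ[k] t))
    = Ftw k H P γ γinv ((rhoMap k H P (U ⊗ₜ[k] s)) ⊗ₜ[k] (rhoMap k H P (V ⊗ₜ[k] t))) := by
  induction U using TensorProduct.induction_on with
  | zero => simp
  | tmul u1 Ub =>
    induction V using TensorProduct.induction_on with
    | zero => simp
    | tmul v1 Vb =>
      induction Ub using TensorProduct.induction_on with
      | zero => simp [rhoMap, sigmaMap, Ftw, G3, G4, conv2]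
      | tmul u2 u3 =>
        induction Vb using TensorProduct.induction_on with
        | zero => simp [rhoMap, sigmaMap, Ftw, G3, G4, conv2]
        | tmul v2 v3 =>
          induction s using TensorProduct.induction_on with
          | zero => simp [rhoMap, sigmaMap, Ftw, G3, G4, conv2]
          | tmul c w =>
            induction t using TensorProduct.induction_on with
            | zero => simp [rhoMap, sigmaMap, Ftw, G3, G4, conv2]
            | tmul e z =>
              simp [rhoMap, sigmaMap, Ftw, G3, G4, conv2, Lam_tmul,
                TensorProduct.assoc_tmul, TensorProduct.assoc_symm_tmul,
                ← TensorProduct.smul_tmul', TensorProduct.tmul_smul,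
                map_smul, smul_smul, smul_eq_mul, mul_comm, mul_left_comm]
            | add a b ha hb =>
              simp only [TensorProduct.tmul_add, TensorProduct.add_tmul, map_add,
                ha, hb]
          | add a b ha hb =>
            simp only [TensorProduct.tmul_add, TensorProduct.add_tmul, map_add,
              ha, hb]
        | add a b ha hb =>
          simp only [TensorProduct.tmul_add, TensorProduct.add_tmul, map_add,
            LinearMap.add_apply, ha, hb, add_smul, smul_add]
      | add a b ha hb =>
        simp only [TensorProduct.tmul_add, TensorProduct.add_tmul, map_add,
          LinearMap.add_apply, ha, hb, add_smul, smul_add]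
    | add a b ha hb =>
      simp only [TensorProduct.tmul_add, TensorProduct.add_tmul, map_add,
        LinearMap.add_apply, ha, hb]
  | add a b ha hb =>
    simp only [TensorProduct.tmul_add, TensorProduct.add_tmul, map_add,
      LinearMap.add_apply, ha, hb]

lemma Gident (γ γinv : H ⊗[k] H →ₗ[k] k) (S T : H ⊗[k] (H ⊗[k] P)) :
    TensorProduct.map (twistedMulH k H γ γinv) (Lam k H P γ)
        ((TensorProduct.tensorTensorTensorComm k H (H ⊗[k] P) H (H ⊗[k] P)) (S ⊗ₜ[k] T))
      = Ftw k H P γ γinv ((Wmap k H P S) ⊗ₜ[k] (Wmap k H P T)) := by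
  induction S using TensorProduct.induction_on with
  | zero => simp [Wmap]
  | tmul a s2 =>
    induction T using TensorProduct.induction_on with
    | zero => simp [Wmap]
    | tmul b t2 =>
      have h := Gident0 k H P γ γinv (comul₂ k H a) (comul₂ k H b) s2 t2
      simpa [twistedMulH, Wmap] using h
    | add a' b' ha hb => simp only [TensorProduct.tmul_add, map_add, ha, hb]
  | add a' b' ha hb => simp only [TensorProduct.add_tmul, map_add, ha, hb]

end Aux5


section Aux6

lemma nat1 (t : H ⊗[k] (H ⊗[k] P)) :
    rTensor P (lTensor H (Coalgebra.comul (R := k) (A := H)))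
        ((TensorProduct.assoc k H H P).symm t)
      = (TensorProduct.assoc k H (H ⊗[k] H) P).symm
          (lTensor H (rTensor P (Coalgebra.comul (R := k) (A := H))) t) := by
  induction t using TensorProduct.induction_on with
  | zero => simp
  | tmul a w =>
    induction w using TensorProduct.induction_on with
    | zero => simp
    | tmul h u => simp [TensorProduct.assoc_symm_tmul]
    | add x y hx hy => simp only [TensorProduct.tmul_add, map_add, hx, hy]
  | add x y hx hy => simp only [map_add, hx, hy]

lemma coh1 (δ : P →ₗ[k] H ⊗[k] P) (Y : H ⊗[k] (H ⊗[k] (H ⊗[k] P))) :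
    rhoMap k H P (lTensor (H ⊗[k] (H ⊗[k] H)) δ
        ((TensorProduct.assoc k H (H ⊗[k] H) P).symm
          (lTensor H (TensorProduct.assoc k H H P).symm.toLinearMap Y)))
      = lTensor H (lTensor H (TensorProduct.assoc k H H P).symm.toLinearMap)
          (lTensor H (lTensor H (lTensor H δ)) Y) := by
  induction Y using TensorProduct.induction_on with
  | zero => simp
  | tmul a Yb =>
    induction Yb using TensorProduct.induction_on with
    | zero => simp
    | tmul c w =>
      induction w using TensorProduct.induction_on with
      | zero => simp
      | tmul h u =>
        simp [rhoMap, sigmaMap, TensorProduct.assoc_symm_tmul, TensorProduct.assoc_tmul]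
      | add x y hx hy => simp only [TensorProduct.tmul_add, map_add, hx, hy]
    | add x y hx hy => simp only [TensorProduct.tmul_add, map_add, hx, hy]
  | add x y hx hy => simp only [map_add, hx, hy]

lemma Wcoact (δ : P →ₗ[k] H ⊗[k] P)
    (hco : ∀ p, (rTensor P Coalgebra.comul) (δ p)
      = (TensorProduct.assoc k H H P).symm ((lTensor H δ) (δ p))) (p : P) :
    Wmap k H P ((lTensor H δ) (δ p))
      = lTensor H (lTensor H (rTensor P (Coalgebra.comul (R := k) (A := H))))
          (lTensor H (lTensor H δ) ((lTensor H δ) (δ p))) := by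
  have hco' : rTensor P (Coalgebra.comul (R := k) (A := H)) ∘ₗ δ
      = (TensorProduct.assoc k H H P).symm.toLinearMap ∘ₗ lTensor H δ ∘ₗ δ := by
    ext p; simpa using hco p
  -- left-hand side chain
  have e1 : rTensor (H ⊗[k] P) (comul₂ k H) ((lTensor H δ) (δ p))
      = rTensor (H ⊗[k] P) (lTensor H (Coalgebra.comul (R := k) (A := H)))
          (rTensor (H ⊗[k] P) (Coalgebra.comul (R := k) (A := H))
            ((lTensor H δ) (δ p))) := by
    rw [comul₂, rTensor_comp, LinearMap.comp_apply]
  have e2 : rTensor (H ⊗[k] P) (Coalgebra.comul (R := k) (A := H))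
        ((lTensor H δ) (δ p))
      = lTensor (H ⊗[k] H) δ ((rTensor P (Coalgebra.comul (R := k) (A := H))) (δ p)) := by
    have h : rTensor (H ⊗[k] P) (Coalgebra.comul (R := k) (A := H)) ∘ₗ lTensor H δ
        = lTensor (H ⊗[k] H) δ ∘ₗ rTensor P (Coalgebra.comul (R := k) (A := H)) := by
      rw [rTensor_comp_lTensor, lTensor_comp_rTensor]
    calc rTensor (H ⊗[k] P) (Coalgebra.comul (R := k) (A := H)) ((lTensor H δ) (δ p))
        = (rTensor (H ⊗[k] P) (Coalgebra.comul (R := k) (A := H)) ∘ₗ lTensor H δ) (δ p) := rfl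
      _ = _ := by rw [h]; rfl
  have e3 : ∀ t : (H ⊗[k] H) ⊗[k] P,
      rTensor (H ⊗[k] P) (lTensor H (Coalgebra.comul (R := k) (A := H)))
          (lTensor (H ⊗[k] H) δ t)
        = lTensor (H ⊗[k] (H ⊗[k] H)) δ
            (rTensor P (lTensor H (Coalgebra.comul (R := k) (A := H))) t) := by
    intro t
    have h : rTensor (H ⊗[k] P) (lTensor H (Coalgebra.comul (R := k) (A := H)))
          ∘ₗ lTensor (H ⊗[k] H) δ
        = lTensor (H ⊗[k] (H ⊗[k] H)) δ
          ∘ₗ rTensor P (lTensor H (Coalgebra.comul (R := k) (A := H))) := by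
      rw [rTensor_comp_lTensor, lTensor_comp_rTensor]
    calc rTensor (H ⊗[k] P) (lTensor H (Coalgebra.comul (R := k) (A := H)))
          (lTensor (H ⊗[k] H) δ t)
        = (rTensor (H ⊗[k] P) (lTensor H (Coalgebra.comul (R := k) (A := H)))
            ∘ₗ lTensor (H ⊗[k] H) δ) t := rfl
      _ = _ := by rw [h]; rfl
  have e5 : lTensor H (rTensor P (Coalgebra.comul (R := k) (A := H)))
        ((lTensor H δ) (δ p))
      = lTensor H (TensorProduct.assoc k H H P).symm.toLinearMap
          (lTensor H (lTensor H δ) ((lTensor H δ) (δ p))) := by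
    rw [← LinearMap.comp_apply, ← lTensor_comp, hco']
    simp [lTensor_comp]
  rw [Wmap, LinearMap.comp_apply, e1, e2, hco p, e3, nat1, e5, coh1]
  -- right-hand side chain
  rw [← LinearMap.comp_apply (lTensor H (lTensor H (rTensor P Coalgebra.comul))),
    ← lTensor_comp, ← lTensor_comp, ← LinearMap.comp_apply, ← lTensor_comp, hco']
  simp [lTensor_comp]

end Aux6


section Aux7

lemma lid_kk (t : k ⊗[k] k) : (TensorProduct.lid k k) t = mul' k k t := by
  induction t using TensorProduct.induction_on with
  | zero => simp
  | tmul a b => simp [smul_eq_mul]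
  | add x y hx hy => simp only [map_add, hx, hy]

lemma conv_collapse (γ γinv : H ⊗[k] H →ₗ[k] k)
    (hinv : convHH k H γinv γ = Coalgebra.counit) (f g : H) :
    conv2 k H γinv γ ((Coalgebra.comul (R := k) f) ⊗ₜ[k] (Coalgebra.comul (R := k) g))
      = Coalgebra.counit (R := k) f * Coalgebra.counit (R := k) g := by
  have h := LinearMap.congr_fun hinv (f ⊗ₜ[k] g)
  rw [convHH] at h
  simp only [LinearMap.comp_apply, LinearEquiv.coe_coe] at h
  rw [comulHH_tmul, lid_kk] at h
  rw [conv2]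
  simp only [LinearMap.comp_apply, LinearEquiv.coe_coe]
  rw [h, counitHH_tmul]

lemma lemM1 (γ γinv : H ⊗[k] H →ₗ[k] k)
    (hinv : convHH k H γinv γ = Coalgebra.counit)
    (S T : H ⊗[k] (H ⊗[k] (H ⊗[k] P))) :
    Ftw k H P γ γinv
        ((lTensor H (lTensor H (rTensor P (Coalgebra.comul (R := k) (A := H)))) S)
          ⊗ₜ[k] (lTensor H (lTensor H (rTensor P (Coalgebra.comul (R := k) (A := H)))) T))
      = Fcu k H P γ (S ⊗ₜ[k] T) := by
  induction S using TensorProduct.induction_on with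
  | zero => simp
  | tmul a Sb =>
    induction T using TensorProduct.induction_on with
    | zero => simp
    | tmul b Tb =>
      induction Sb using TensorProduct.induction_on with
      | zero => simp [Ftw, Fcu]
      | tmul c w =>
        induction Tb using TensorProduct.induction_on with
        | zero => simp [Ftw, Fcu]
        | tmul e z =>
          induction w using TensorProduct.induction_on with
          | zero => simp [Ftw, Fcu, G3, G3e, G4, G4e]
          | tmul f u =>
            induction z using TensorProduct.induction_on with
            | zero => simp [Ftw, Fcu, G3, G3e, G4, G4e]
            | tmul g v =>
              simp [Ftw, Fcu, G3, G3e, G4, G4e, eps2, conv_collapse k H γ γinv hinv]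
            | add x y hx hy =>
              simp only [TensorProduct.tmul_add, TensorProduct.add_tmul, map_add, hx, hy]
          | add x y hx hy =>
            simp only [TensorProduct.tmul_add, TensorProduct.add_tmul, map_add, hx, hy]
        | add x y hx hy =>
          simp only [TensorProduct.tmul_add, TensorProduct.add_tmul, map_add, hx, hy]
      | add x y hx hy =>
        simp only [TensorProduct.tmul_add, TensorProduct.add_tmul, map_add, hx, hy]
    | add x y hx hy =>
      simp only [TensorProduct.tmul_add, map_add, hx, hy]
  | add x y hx hy =>
    simp only [TensorProduct.add_tmul, map_add, hx, hy]

lemma G4e_delta (w z : H ⊗[k] P) :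
    G4e k H P (w ⊗ₜ[k] z)
      = ((TensorProduct.lid k P) ((rTensor P Coalgebra.counit) w))
        * ((TensorProduct.lid k P) ((rTensor P Coalgebra.counit) z)) := by
  induction w using TensorProduct.induction_on with
  | zero => simp
  | tmul f u =>
    induction z using TensorProduct.induction_on with
    | zero => simp
    | tmul g v =>
      simp [G4e, eps2, smul_mul_assoc, mul_smul_comm, smul_smul, mul_comm]
    | add x y hx hy =>
      simp only [TensorProduct.tmul_add, map_add, hx, hy, mul_add]
  | add x y hx hy =>
    simp only [TensorProduct.add_tmul, map_add, hx, hy, add_mul]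

lemma lemM2 (δ : P →ₗ[k] H ⊗[k] P) (γ : H ⊗[k] H →ₗ[k] k)
    (hcounit : ∀ p, (TensorProduct.lid k P) ((rTensor P Coalgebra.counit) (δ p)) = p)
    (S T : H ⊗[k] (H ⊗[k] P)) :
    Fcu k H P γ ((lTensor H (lTensor H δ) S) ⊗ₜ[k] (lTensor H (lTensor H δ) T))
      = Psi k H P γ (((TensorProduct.assoc k H H P).symm S)
          ⊗ₜ[k] ((TensorProduct.assoc k H H P).symm T)) := by
  induction S using TensorProduct.induction_on with
  | zero => simp
  | tmul a Sb =>
    induction T using TensorProduct.induction_on with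
    | zero => simp
    | tmul b Tb =>
      induction Sb using TensorProduct.induction_on with
      | zero => simp [Fcu]
      | tmul c u =>
        induction Tb using TensorProduct.induction_on with
        | zero => simp [Fcu]
        | tmul e v =>
          simp [Fcu, G3e, TensorProduct.assoc_symm_tmul, Psi_tmul,
            G4e_delta, hcounit]
        | add x y hx hy =>
          simp only [TensorProduct.tmul_add, TensorProduct.add_tmul, map_add, hx, hy]
      | add x y hx hy =>
        simp only [TensorProduct.tmul_add, TensorProduct.add_tmul, map_add, hx, hy]
    | add x y hx hy =>
      simp only [TensorProduct.tmul_add, map_add, hx, hy]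
  | add x y hx hy =>
    simp only [TensorProduct.add_tmul, map_add, hx, hy]

end Aux7

theorem cocycle_twist_comodule_algebra
    (γ γinv : H ⊗[k] H →ₗ[k] k) (hγ : IsTwoCocycle k H γ γinv)
    (δ : P →ₗ[k] H ⊗[k] P) (hδ : IsLeftComodAlg k H P δ) :
    (∀ p q r : P,
      twistedMulP k H P δ γ ((twistedMulP k H P δ γ (p ⊗ₜ[k] q)) ⊗ₜ[k] r)
        = twistedMulP k H P δ γ (p ⊗ₜ[k] (twistedMulP k H P δ γ (q ⊗ₜ[k] r)))) ∧
    (∀ p : P, twistedMulP k H P δ γ ((1 : P) ⊗ₜ[k] p) = p ∧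
              twistedMulP k H P δ γ (p ⊗ₜ[k] (1 : P)) = p) ∧
    (∀ p q : P, δ (twistedMulP k H P δ γ (p ⊗ₜ[k] q))
        = twistedMulHP k H P δ γ γinv ((δ p) ⊗ₜ[k] (δ q))) := by
  obtain ⟨⟨hcounit, hcoassoc⟩, hmul, hone⟩ := hδ
  obtain ⟨hinv1, hinv2, hcoc, h1l, h1r⟩ := hγ
  refine ⟨?_, ?_, ?_⟩
  · intro p q r
    rw [twistedMulP_apply k H P δ γ (twistedMulP k H P δ γ (p ⊗ₜ[k] q)) r,
      twistedMulP_apply k H P δ γ p (twistedMulP k H P δ γ (q ⊗ₜ[k] r)),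
      deltaLam k H P δ γ hmul hcoassoc p q,
      deltaLam k H P δ γ hmul hcoassoc q r,
      lemL k H P γ (δ p) (δ q) (δ r),
      lemL' k H P γ (δ p) (δ q) (δ r),
      hcoc]
  · intro p
    constructor
    · rw [twistedMulP_apply k H P δ γ 1 p, hone, Algebra.TensorProduct.one_def,
        Lam_one_left k H P γ h1l, hcounit p]
    · rw [twistedMulP_apply k H P δ γ p 1, hone, Algebra.TensorProduct.one_def,
        Lam_one_right k H P γ h1r, hcounit p]
  · intro p q
    rw [deltaLam k H P δ γ hmul hcoassoc p q, hcoassoc p, hcoassoc q,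
      tmHP_apply k H P δ γ γinv (δ p) (δ q),
      Gident k H P γ γinv (lTensor H δ (δ p)) (lTensor H δ (δ q)),
      Wcoact k H P δ hcoassoc p, Wcoact k H P δ hcoassoc q,
      lemM1 k H P γ γinv hinv2 (lTensor H (lTensor H δ) (lTensor H δ (δ p)))
        (lTensor H (lTensor H δ) (lTensor H δ (δ q))),
      lemM2 k H P δ γ hcounit (lTensor H δ (δ p)) (lTensor H δ (δ q))]

end
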